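/- Let Λ ⊆ ℝ^N be a Delone set satisfying positivity of weights (PW) with constant w := inf{ν(P) : P a ball pattern with r(P) ≥ 1} > 0, and satisfying uniformity of return words (U). Let P = (x₀,R) be a ball pattern on Λ with R = r(P) ≥ 3. Then for every x ∈ L_P the inner radius of the Voronoi cell of x in the locater set L_P satisfies r_in(V_x(L_P)) ≤ cR, where c = max(2, 4·exp(6^N/(2wN))). -/

import Mathlib

open Filter MeasureTheory Bornology
open scoped ENNReal

noncomputable section

/-- Euclidean space `ℝ^N`. -/
abbrev Euc (N : ℕ) := EuclideanSpace ℝ (Fin N)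

/-- The packing radius of a set: half of the infimum of distances between
distinct points (`⊤` if no such pair exists). -/
def rPack {N : ℕ} (Λ : Set (Euc N)) : ℝ≥0∞ :=
  ⨅ (x ∈ Λ) (y ∈ Λ) (_ : x ≠ y), edist x y / 2

/-- The covering radius of a set: the supremum over all points of the space of
the distance to the set. -/
def rCov {N : ℕ} (Λ : Set (Euc N)) : ℝ≥0∞ :=
  ⨆ p : Euc N, EMetric.infEdist p Λ

/-- A set is uniformly discrete if its packing radius is positive. -/
def UniformlyDiscrete {N : ℕ} (Λ : Set (Euc N)) : Prop := 0 < rPack Λ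

/-- A set is relatively dense if its covering radius is finite. -/
def RelativelyDense {N : ℕ} (Λ : Set (Euc N)) : Prop := rCov Λ < ⊤

/-- A Delone set is a uniformly discrete and relatively dense set. -/
def IsDelone {N : ℕ} (Λ : Set (Euc N)) : Prop :=
  UniformlyDiscrete Λ ∧ RelativelyDense Λ

/-- Λ is non-periodic if no nonzero translate of Λ equals Λ. -/
def NonPeriodic {N : ℕ} (Λ : Set (Euc N)) : Prop :=
  ∀ t : Euc N, t ≠ 0 → (fun p => p - t) '' Λ ≠ Λ

/-- The patch of the ball pattern `(x, R)`: `(Λ - x) ∩ B_R`. -/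
def patch {N : ℕ} (Λ : Set (Euc N)) (x : Euc N) (R : ℝ) : Set (Euc N) :=
  ((fun y => y - x) '' Λ) ∩ Metric.closedBall 0 R

/-- The locater set of the ball pattern `(x, R)`: the set of points of Λ whose
`R`-patch agrees with that of `x`. -/
def locSet {N : ℕ} (Λ : Set (Euc N)) (x : Euc N) (R : ℝ) : Set (Euc N) :=
  {y ∈ Λ | patch Λ y R = patch Λ x R}

/-- Λ is repetitive if the locater set of every ball pattern is relatively dense. -/
def Repetitive {N : ℕ} (Λ : Set (Euc N)) : Prop :=
  ∀ x ∈ Λ, ∀ R : ℝ, 0 < R → RelativelyDense (locSet Λ x R)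

/-- `L_P(Q)`: the points of the locater set of `(x,R)` whose `R`-ball lies inside `Q`. -/
def locIn {N : ℕ} (Λ : Set (Euc N)) (x : Euc N) (R : ℝ) (Q : Set (Euc N)) :
    Set (Euc N) :=
  {y ∈ locSet Λ x R | Metric.closedBall y R ⊆ Q}

/-- `♯_P Q`: the number of copies of the ball pattern `P = (x,R)` in `Q`. -/
def countP {N : ℕ} (Λ : Set (Euc N)) (x : Euc N) (R : ℝ) (Q : Set (Euc N)) : ℕ :=
  (locIn Λ x R Q).ncard

/-- `♯'_P Q`: the maximal number of completely disjoint copies of `P = (x,R)` in `Q`. -/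
def countP' {N : ℕ} (Λ : Set (Euc N)) (x : Euc N) (R : ℝ) (Q : Set (Euc N)) : ℕ :=
  sSup {n : ℕ | ∃ A : Finset (Euc N), ↑A ⊆ locIn Λ x R Q ∧
    (∀ u ∈ A, ∀ v ∈ A, u ≠ v → 2 * R < dist u v) ∧ A.card = n}

/-- The cube with corner `a` and sidelength `s`. -/
def cube {N : ℕ} (a : Euc N) (s : ℝ) : Set (Euc N) :=
  {p | ∀ i, a i ≤ p i ∧ p i ≤ a i + s}

/-- The filter describing cubes `C` with `|C| → ∞`: arbitrary corner, sidelength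
tending to infinity. -/
def cubeFilter (N : ℕ) : Filter (Euc N × ℝ) := (⊤ : Filter (Euc N)) ×ˢ atTop

/-- The Lebesgue measure `|B_R|` of a closed ball of radius `R` in `ℝ^N`. -/
def ballVol (N : ℕ) (R : ℝ) : ℝ := (volume (Metric.closedBall (0 : Euc N) R)).toReal

/-- The lower density `ν(P)` of the ball pattern `P = (x,R)`:
`liminf_{|C|→∞} ♯_P C · |B_R| / |C|` over cubes `C`. -/
def nu {N : ℕ} (Λ : Set (Euc N)) (x : Euc N) (R : ℝ) : ℝ :=
  liminf (fun cs : Euc N × ℝ =>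
    (countP Λ x R (cube cs.1 cs.2) : ℝ) * ballVol N R / cs.2 ^ N) (cubeFilter N)

/-- The lower reduced density `ν'(P)` of the ball pattern `P = (x,R)`:
`liminf_{|C|→∞} ♯'_P C · |B_R| / |C|` over cubes `C`. -/
def nu' {N : ℕ} (Λ : Set (Euc N)) (x : Euc N) (R : ℝ) : ℝ :=
  liminf (fun cs : Euc N × ℝ =>
    (countP' Λ x R (cube cs.1 cs.2) : ℝ) * ballVol N R / cs.2 ^ N) (cubeFilter N)

/-- `w = inf {ν(P) : r(P) ≥ 1}`. -/
def wPW {N : ℕ} (Λ : Set (Euc N)) : ℝ :=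
  sInf {v | ∃ x ∈ Λ, ∃ R : ℝ, 1 ≤ R ∧ v = nu Λ x R}

/-- `w' = inf {ν'(P) : r(P) ≥ 1}`. -/
def wPQ {N : ℕ} (Λ : Set (Euc N)) : ℝ :=
  sInf {v | ∃ x ∈ Λ, ∃ R : ℝ, 1 ≤ R ∧ v = nu' Λ x R}

/-- Positivity of weights (PW). -/
def PW {N : ℕ} (Λ : Set (Euc N)) : Prop := 0 < wPW Λ

/-- Positivity of quasiweights (PQ). -/
def PQ {N : ℕ} (Λ : Set (Euc N)) : Prop := 0 < wPQ Λ

/-- A function on (bounded) subsets of `ℝ^N` is subadditive if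
`F(Q₁ ∪ Q₂) ≤ F(Q₁) + F(Q₂)` for disjoint bounded `Q₁, Q₂`. -/
def SubadditiveFn {N : ℕ} (F : Set (Euc N) → ℝ) : Prop :=
  ∀ Q₁ Q₂ : Set (Euc N), IsBounded Q₁ → IsBounded Q₂ → Disjoint Q₁ Q₂ →
    F (Q₁ ∪ Q₂) ≤ F Q₁ + F Q₂

/-- A function on (bounded) subsets is Λ-invariant if `F(Q) = F(t + Q)` whenever
`t + (Q ∩ Λ) = (t + Q) ∩ Λ`. -/
def InvariantFn {N : ℕ} (Λ : Set (Euc N)) (F : Set (Euc N) → ℝ) : Prop :=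
  ∀ (t : Euc N) (Q : Set (Euc N)), IsBounded Q →
    (fun p => t + p) '' (Q ∩ Λ) = ((fun p => t + p) '' Q) ∩ Λ →
    F Q = F ((fun p => t + p) '' Q)

/-- Λ satisfies the subadditive ergodic theorem (SET) if for every subadditive
Λ-invariant function `F` the limit `lim_{|C|→∞} F(C)/|C|` over cubes exists. -/
def SET {N : ℕ} (Λ : Set (Euc N)) : Prop :=
  ∀ F : Set (Euc N) → ℝ, SubadditiveFn F → InvariantFn Λ F →
    ∃ L : ℝ, Tendsto (fun cs : Euc N × ℝ => F (cube cs.1 cs.2) / cs.2 ^ N)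
      (cubeFilter N) (nhds L)

/-- Linear repetitivity (LR): `sup {r_cov(L_P)/r(P) : r(P) ≥ 1} < ∞`. -/
def LR {N : ℕ} (Λ : Set (Euc N)) : Prop :=
  (⨆ (x ∈ Λ) (R : ℝ) (_ : 1 ≤ R), rCov (locSet Λ x R) / ENNReal.ofReal R) < ⊤

/-- The repulsion property (RP): `inf {r_pack(L_P)/r(P) : P a ball pattern} > 0`. -/
def RP {N : ℕ} (Λ : Set (Euc N)) : Prop :=
  0 < ⨅ (x ∈ Λ) (R : ℝ) (_ : 0 < R), rPack (locSet Λ x R) / ENNReal.ofReal R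

/-- The Voronoi cell of `x` with respect to `Γ`. -/
def voronoiCell {N : ℕ} (Γ : Set (Euc N)) (x : Euc N) : Set (Euc N) :=
  {p | ∀ y ∈ Γ, dist p x ≤ dist p y}

/-- The inner radius of a set `V` around `x`. -/
def rIn {N : ℕ} (x : Euc N) (V : Set (Euc N)) : ℝ≥0∞ :=
  sSup {R : ℝ≥0∞ | EMetric.closedBall x R ⊆ V}

/-- The outer radius of a set `V` around `x`. -/
def rOut {N : ℕ} (x : Euc N) (V : Set (Euc N)) : ℝ≥0∞ :=
  sInf {R : ℝ≥0∞ | V ⊆ EMetric.closedBall x R}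

/-- The distortion `λ(V) = r_out(V)/r_in(V)` of a set `V` around `x`. -/
def distortion {N : ℕ} (x : Euc N) (V : Set (Euc N)) : ℝ≥0∞ := rOut x V / rIn x V

/-- The distortion of a discrete set: the supremum of the distortions of its
Voronoi cells. -/
def setDistortion {N : ℕ} (Γ : Set (Euc N)) : ℝ≥0∞ :=
  ⨆ x ∈ Γ, distortion x (voronoiCell Γ x)

/-- Uniformity of return words (U): the distortions of all locater sets of Λ are
uniformly bounded. -/
def URW {N : ℕ} (Λ : Set (Euc N)) : Prop :=
  (⨆ (x ∈ Λ) (R : ℝ) (_ : 0 < R), setDistortion (locSet Λ x R)) < ⊤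

end

/-!
Suppose the Voronoi cell of `x` in `L_P` contains the ball of radius `cR`, so that `x` is the only
point of `L_P` within `cR`. For the scales `s_k = 3R(5/4)^k ≤ cR`, `k ≤ K`, a copy `y` of the
pattern `(x, s_k)` then has no other point of `L_P` within `s_k - R`, since such a point `z`
would transport to the point `z - y + x ≠ x` of `L_P`. In a large cube, give every copy of
`(x, s_0)` the ball of radius `(s_m - R)/2`, `m` the deepest level it is a copy of; these balls are
disjoint. By (PW) each level `k ≥ 1` has at least about `w|C|/|B_{s_k}|` copies, and each of them
gains volume at least `(3N/8)(4/15)^N |B_{s_k}|` from level `k - 1`, so `K w N ≤ 2·6^N`,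
whereas `(5/4)^(K+1) > c/3 ≥ (4/3) exp(6^N/(2wN))` forces `K w N > 2·6^N`.
-/

open Finset

theorem Finset.sum_sub_apply_zero_eq_sum_card_mul {α : Type*} (F : Finset α) (m : α → ℕ)
    (g : ℕ → ℝ) {K : ℕ} (hm : ∀ y ∈ F, m y ≤ K) :
    ∑ y ∈ F, (g (m y) - g 0) = ∑ k ∈ range K, (#{y ∈ F | k < m y} : ℝ) * (g (k + 1) - g k) := by
  have hsplit : ∀ y ∈ F,
      g (m y) - g 0 = ∑ k ∈ range K, if k < m y then g (k + 1) - g k else 0 := by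
    intro y hy
    rw [← sum_filter, ← sum_range_sub g (m y)]
    congr 1
    ext k
    simp only [mem_filter, mem_range]
    have := hm y hy
    omega
  rw [sum_congr rfl hsplit, sum_comm]
  refine sum_congr rfl fun k _ => ?_
  rw [← sum_filter, sum_const, nsmul_eq_mul]

theorem natCast_mul_pow_pred_mul_sub_le_pow_sub_pow {n : ℕ} {a b : ℝ} (hb : 0 ≤ b) (hab : b ≤ a) :
    n * b ^ (n - 1) * (a - b) ≤ a ^ n - b ^ n := by
  have hterm : ∀ i ∈ range n, b ^ i * b ^ (n - 1 - i) = b ^ (n - 1) := by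
    intro i hi
    rw [← pow_add]
    have := mem_range.1 hi
    congr 1
    omega
  rw [← geom_sum₂_mul a b n]
  gcongr
  calc (n : ℝ) * b ^ (n - 1) = ∑ i ∈ range n, b ^ i * b ^ (n - 1 - i) := by
        rw [sum_congr rfl hterm, sum_const, card_range, nsmul_eq_mul]
    _ ≤ ∑ i ∈ range n, a ^ i * b ^ (n - 1 - i) := by gcongr

theorem pow_layer_increment {N : ℕ} (hN : 0 < N) {R t : ℝ} (hR : 0 ≤ R) (ht : 3 * R ≤ t) :
    3 * N / 8 * (4 / 15) ^ N * (5 / 4 * t) ^ N ≤ ((5 / 4 * t - R) / 2) ^ N - ((t - R) / 2) ^ N := by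
  obtain ⟨M, rfl⟩ : ∃ M, N = M + 1 := ⟨N - 1, by omega⟩
  have hscale : (4 / 15 : ℝ) ^ (M + 1) * (5 / 4 * t) ^ (M + 1) = (t / 3) ^ M * (t / 3) := by
    rw [← mul_pow, ← pow_succ]; ring_nf
  calc 3 * ((M + 1 : ℕ) : ℝ) / 8 * (4 / 15) ^ (M + 1) * (5 / 4 * t) ^ (M + 1)
      = ((M + 1 : ℕ) : ℝ) * (t / 3) ^ M * (t / 8) := by rw [mul_assoc, hscale]; ring
    _ ≤ ((M + 1 : ℕ) : ℝ) * ((t - R) / 2) ^ (M + 1 - 1) * ((5 / 4 * t - R) / 2 - (t - R) / 2) := by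
        have hb : t / 3 ≤ (t - R) / 2 := by linarith
        have hinc : (5 / 4 * t - R) / 2 - (t - R) / 2 = t / 8 := by ring
        rw [Nat.add_sub_cancel, hinc]
        have hpow : (t / 3) ^ M ≤ ((t - R) / 2) ^ M := pow_le_pow_left₀ (by linarith) hb M
        exact mul_le_mul_of_nonneg_right (mul_le_mul_of_nonneg_left hpow (Nat.cast_nonneg _))
          (by linarith)
    _ ≤ _ := natCast_mul_pow_pred_mul_sub_le_pow_sub_pow (by linarith) (by linarith)

theorem four_mul_lt_of_exp_lt_pow {E : ℝ} {K : ℕ} (h : 4 / 3 * Real.exp E < (5 / 4) ^ (K + 1)) :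
    4 * E < K := by
  have hexp_quarter : Real.exp (1 / 4) ≤ 4 / 3 := by
    have hinv : Real.exp (1 / 4) * Real.exp (-(1 / 4)) = 1 := by
      rw [← Real.exp_add]; simp
    nlinarith [Real.add_one_le_exp (-(1 / 4)), Real.exp_pos (1 / 4)]
  have hpow : (5 / 4 : ℝ) ^ (K + 1) ≤ Real.exp ((K + 1) / 4) := by
    calc (5 / 4 : ℝ) ^ (K + 1) ≤ Real.exp (1 / 4) ^ (K + 1) := by
          gcongr; linarith [Real.add_one_le_exp (1 / 4)]
      _ = Real.exp ((K + 1) / 4) := by rw [← Real.exp_nat_mul]; push_cast; ring_nf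
  have hlt : Real.exp (E + 1 / 4) < Real.exp ((K + 1) / 4) := by
    rw [Real.exp_add]
    nlinarith [Real.exp_pos E]
  linarith [Real.exp_lt_exp.1 hlt]

section LocaterSets

variable {N : ℕ} {Λ : Set (Euc N)}

theorem mem_patch {x v : Euc N} {R : ℝ} : v ∈ patch Λ x R ↔ v + x ∈ Λ ∧ ‖v‖ ≤ R := by
  simp [patch, sub_eq_iff_eq_add]

theorem mem_locSet_iff {x y : Euc N} {s : ℝ} :
    y ∈ locSet Λ x s ↔ y ∈ Λ ∧ ∀ v : Euc N, ‖v‖ ≤ s → (v + y ∈ Λ ↔ v + x ∈ Λ) := by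
  simp only [locSet, Set.mem_ofPred_eq, Set.ext_iff, mem_patch, and_congr_left_iff]

theorem locSet_anti {x : Euc N} {R s : ℝ} (h : R ≤ s) : locSet Λ x s ⊆ locSet Λ x R := by
  intro y hy
  rw [mem_locSet_iff] at hy ⊢
  exact ⟨hy.1, fun v hv => hy.2 v (hv.trans h)⟩

theorem locSet_subset_of_mem {x₀ x : Euc N} {R s : ℝ} (hx : x ∈ locSet Λ x₀ R) (h : R ≤ s) :
    locSet Λ x s ⊆ locSet Λ x₀ R := fun _ hy => ⟨hy.1, (locSet_anti h hy).2.trans hx.2⟩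

theorem sub_add_mem_locSet {x₀ x y z : Euc N} {R s : ℝ} (hR : 0 ≤ R) (hy : y ∈ locSet Λ x s)
    (hz : z ∈ locSet Λ x₀ R) (hd : dist z y + R ≤ s) : z - y + x ∈ locSet Λ x₀ R := by
  rw [mem_locSet_iff] at hy hz ⊢
  have hshift : ∀ v : Euc N, ‖v‖ ≤ R → (v + z ∈ Λ ↔ v + (z - y + x) ∈ Λ) := by
    intro v hv
    have hnorm : ‖v + (z - y)‖ ≤ s := by
      calc ‖v + (z - y)‖ ≤ ‖v‖ + dist z y := by rw [dist_eq_norm]; exact norm_add_le _ _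
        _ ≤ s := by linarith
    have := hy.2 _ hnorm
    rwa [add_assoc, sub_add_cancel, add_assoc] at this
  refine ⟨?_, fun v hv => (hshift v hv).symm.trans (hz.2 v hv)⟩
  simpa using (hshift 0 (by simpa using hR)).1 (by simpa using hz.1)

/-- A closer point `z` would transport along `y ↦ x` to the point `z - y + x ≠ x` of
`locSet Λ x₀ R` within `ρ` of `x`. -/
theorem sub_lt_dist_of_mem_locSet {x₀ x y z : Euc N} {R s ρ : ℝ} (hR : 0 ≤ R)
    (hiso : ∀ z ∈ locSet Λ x₀ R, dist z x ≤ ρ → z = x) (hsρ : s ≤ ρ)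
    (hy : y ∈ locSet Λ x s) (hz : z ∈ locSet Λ x₀ R) (hne : z ≠ y) : s - R < dist z y := by
  by_contra! hle
  have htrans := hiso _ (sub_add_mem_locSet hR hy hz (by linarith))
    (by rw [dist_eq_norm, add_sub_cancel_right, ← dist_eq_norm]; linarith)
  exact hne (sub_eq_zero.1 (by simpa using htrans))

end LocaterSets

theorem eq_of_closedBall_subset_voronoiCell {N : ℕ} {Γ : Set (Euc N)} {x z : Euc N} {ρ : ℝ}
    (h : Metric.closedEBall x (ENNReal.ofReal ρ) ⊆ voronoiCell Γ x) (hz : z ∈ Γ)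
    (hzx : dist z x ≤ ρ) : z = x := by
  have hcell := h (show edist z x ≤ ENNReal.ofReal ρ by
    rw [edist_dist]; exact ENNReal.ofReal_le_ofReal hzx)
  exact dist_le_zero.1 (by simpa using hcell z hz)

theorem sum_measureReal_closedBall_le {X : Type*} [PseudoMetricSpace X] [MeasurableSpace X]
    [OpensMeasurableSpace X] {μ : Measure X} {Q : Set X} (hQ : μ Q ≠ ⊤) {F : Finset X}
    {ρ : X → ℝ} (hsub : ∀ y ∈ F, Metric.closedBall y (ρ y) ⊆ Q)
    (hsep : ∀ y ∈ F, ∀ z ∈ F, y ≠ z → ρ y + ρ z < dist y z) :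
    ∑ y ∈ F, μ.real (Metric.closedBall y (ρ y)) ≤ μ.real Q := by
  have hdisj : (F : Set X).PairwiseDisjoint fun y => Metric.closedBall y (ρ y) :=
    fun y hy z hz hyz => Metric.closedBall_disjoint_closedBall (hsep y hy z hz hyz)
  rw [← measureReal_biUnion_finset hdisj (fun _ _ => measurableSet_closedBall)
    fun y hy => ne_top_of_le_ne_top hQ (measure_mono (hsub y hy))]
  exact measureReal_mono (Set.iUnion₂_subset hsub) hQ

section Volume

variable {N : ℕ}

theorem volume_cube (a : Euc N) {σ : ℝ} (hσ : 0 ≤ σ) :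
    volume (cube a σ) = ENNReal.ofReal (σ ^ N) := by
  have hcube : cube a σ = (MeasurableEquiv.toLp 2 (Fin N → ℝ)).symm ⁻¹'
      Set.univ.pi fun i => Set.Icc (a i) (a i + σ) := by
    ext p
    simp only [cube, Set.mem_ofPred_eq, Set.mem_preimage, Set.mem_pi, Set.mem_univ,
      true_implies, Set.mem_Icc]
    rfl
  rw [hcube, (EuclideanSpace.volume_preserving_symm_measurableEquiv_toLp (Fin N)).measure_preimage
    (MeasurableSet.univ_pi fun i => measurableSet_Icc).nullMeasurableSet, volume_pi_pi]
  simp [Real.volume_Icc, ← ENNReal.ofReal_pow hσ]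

theorem ballVol_eq_measureReal (y : Euc N) (r : ℝ) :
    ballVol N r = volume.real (Metric.closedBall y r) :=
  (Measure.addHaar_real_closedBall_center volume y r).symm

theorem ballVol_eq {r : ℝ} (hr : 0 ≤ r) : ballVol N r = r ^ N * ballVol N 1 := by
  rw [ballVol_eq_measureReal 0, ballVol_eq_measureReal 0,
    Measure.addHaar_real_closedBall' volume (0 : Euc N) hr, finrank_euclideanSpace_fin]

theorem ballVol_pos {r : ℝ} (hr : 0 < r) : 0 < ballVol N r :=
  ENNReal.toReal_pos (Metric.measure_closedBall_pos volume 0 hr).ne'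
    measure_closedBall_lt_top.ne

theorem ballVol_mono : Monotone (ballVol N) := fun _ _ h =>
  ENNReal.toReal_mono measure_closedBall_lt_top.ne
    (measure_mono (Metric.closedBall_subset_closedBall h))

theorem Set.Finite.of_closedBall_subset {D Q : Set (Euc N)} (hQ : volume Q ≠ ⊤) {r : ℝ}
    (hr : 0 < r) (hsub : ∀ y ∈ D, Metric.closedBall y r ⊆ Q)
    (hsep : D.Pairwise fun y z => 2 * r < dist y z) : D.Finite := by
  by_contra hinf
  obtain ⟨n, hn⟩ := exists_nat_gt (volume.real Q / ballVol N r)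
  obtain ⟨F, hFD, rfl⟩ := Set.Infinite.exists_subset_card_eq hinf n
  have hpack := sum_measureReal_closedBall_le hQ (fun y hy => hsub y (hFD hy))
    fun y hy z hz hyz => by linarith [hsep (hFD hy) (hFD hz) hyz]
  simp only [← ballVol_eq_measureReal, Finset.sum_const, nsmul_eq_mul] at hpack
  rw [div_lt_iff₀ (ballVol_pos hr)] at hn
  linarith

end Volume

/-- Each point of `A 0` gets the ball of radius `r m`, `m ≤ K` its deepest level; these balls are
disjoint, and summing their volumes level by level gives the left side. -/
theorem sum_ncard_mul_ballVol_sub_le {N : ℕ} {Q : Set (Euc N)} (hQ : volume Q ≠ ⊤)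
    {A : ℕ → Set (Euc N)} (hA : Antitone A) {r : ℕ → ℝ} (hr0 : 0 < r 0) (hr : Monotone r)
    {K : ℕ} (hball : ∀ k, ∀ y ∈ A k, Metric.closedBall y (r k) ⊆ Q)
    (hsep : ∀ k ≤ K, ∀ y ∈ A k, ∀ z ∈ A 0, z ≠ y → 2 * r k < dist z y) :
    ∑ k ∈ range K, ((A (k + 1)).ncard : ℝ) * (ballVol N (r (k + 1)) - ballVol N (r k)) ≤
      volume.real Q := by
  classical
  have hfin : (A 0).Finite := Set.Finite.of_closedBall_subset hQ hr0 (hball 0)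
    fun y hy z hz hyz => hsep 0 K.zero_le z hz y hy hyz
  set F := hfin.toFinset
  set m : Euc N → ℕ := fun y => Nat.findGreatest (fun k => y ∈ A k) K
  have hmK : ∀ y, m y ≤ K := fun y => Nat.findGreatest_le K
  have hmA : ∀ y ∈ F, y ∈ A (m y) := fun y hy =>
    Nat.findGreatest_spec (P := (y ∈ A ·)) K.zero_le (hfin.mem_toFinset.1 hy)
  have hdisj : ∀ y ∈ F, ∀ z ∈ F, m y ≤ m z → y ≠ z → r (m y) + r (m z) < dist y z :=
    fun y hy z hz hmyz hyz => by
      linarith [hr hmyz, hsep (m z) (hmK z) z (hmA z hz) y (hfin.mem_toFinset.1 hy) hyz]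
  have hpack : ∑ y ∈ F, ballVol N (r (m y)) ≤ volume.real Q := by
    rw [sum_congr rfl fun y _ => ballVol_eq_measureReal y (r (m y))]
    refine sum_measureReal_closedBall_le hQ (fun y hy => hball _ y (hmA y hy))
      fun y hy z hz hyz => ?_
    rcases le_total (m y) (m z) with h | h
    · exact hdisj y hy z hz h hyz
    · rw [add_comm, dist_comm]; exact hdisj z hz y hy h hyz.symm
  have hcount : ∀ k < K, ((A (k + 1)).ncard : ℝ) ≤ #{y ∈ F | k < m y} := by
    intro k hk
    rw [← Set.ncard_coe_finset]
    refine Nat.mono_cast (Set.ncard_le_ncard (fun y hy => ?_) (Finset.finite_toSet _))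
    have hy0 : y ∈ A 0 := hA (Nat.zero_le _) hy
    exact Finset.mem_filter.2 ⟨hfin.mem_toFinset.2 hy0, Nat.le_findGreatest hk hy⟩
  calc ∑ k ∈ range K, ((A (k + 1)).ncard : ℝ) * (ballVol N (r (k + 1)) - ballVol N (r k))
      ≤ ∑ k ∈ range K, (#{y ∈ F | k < m y} : ℝ) * (ballVol N (r (k + 1)) - ballVol N (r k)) :=
        sum_le_sum fun k hk => mul_le_mul_of_nonneg_right (hcount k (mem_range.1 hk))
          (sub_nonneg.2 (ballVol_mono (hr k.le_succ)))
    _ = ∑ y ∈ F, (ballVol N (r (m y)) - ballVol N (r 0)) :=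
        (F.sum_sub_apply_zero_eq_sum_card_mul m (fun k => ballVol N (r k)) fun y _ => hmK y).symm
    _ ≤ ∑ y ∈ F, ballVol N (r (m y)) :=
        sum_le_sum fun y _ => sub_le_self _ (ballVol_pos hr0).le
    _ ≤ volume.real Q := hpack

section Density

variable {N : ℕ} {Λ : Set (Euc N)}

theorem eventually_cubeFilter_pos : ∀ᶠ p in cubeFilter N, 0 < p.2 :=
  (eventually_gt_atTop 0).prod_inr _

theorem eventually_countP_ratio_nonneg (x : Euc N) (R : ℝ) :
    ∀ᶠ p in cubeFilter N, 0 ≤ (countP Λ x R (cube p.1 p.2) : ℝ) * ballVol N R / p.2 ^ N :=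
  eventually_cubeFilter_pos.mono fun _ hσ => by
    have : 0 ≤ ballVol N R := ENNReal.toReal_nonneg
    positivity

theorem nu_nonneg (x : Euc N) (R : ℝ) : 0 ≤ nu Λ x R := by
  rw [nu, liminf_eq]
  by_cases hbdd : BddAbove {a : ℝ | ∀ᶠ p in cubeFilter N,
      a ≤ (countP Λ x R (cube p.1 p.2) : ℝ) * ballVol N R / p.2 ^ N}
  · exact le_csSup hbdd (eventually_countP_ratio_nonneg x R)
  · rw [Real.sSup_of_not_bddAbove hbdd]

theorem wPW_le_nu {x : Euc N} (hx : x ∈ Λ) {R : ℝ} (hR : 1 ≤ R) : wPW Λ ≤ nu Λ x R :=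
  csInf_le ⟨0, by rintro _ ⟨x', -, R', -, rfl⟩; exact nu_nonneg x' R'⟩ ⟨x, hx, R, hR, rfl⟩

theorem eventually_lt_countP_ratio {x : Euc N} (hx : x ∈ Λ) {s a : ℝ} (hs : 1 ≤ s)
    (ha : a < wPW Λ) :
    ∀ᶠ p in cubeFilter N, a < (countP Λ x s (cube p.1 p.2) : ℝ) * ballVol N s / p.2 ^ N :=
  eventually_lt_of_lt_liminf (ha.trans_le (wPW_le_nu hx hs))
    (isBoundedUnder_of_eventually_ge (eventually_countP_ratio_nonneg x s))

end Density

instance cubeFilter_neBot (N : ℕ) : (cubeFilter N).NeBot := by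
  unfold cubeFilter
  infer_instance

theorem ballVol_layer_increment {N : ℕ} (hN : 0 < N) {R t : ℝ} (hR : 0 ≤ R) (ht : 3 * R ≤ t) :
    3 * N / 8 * (4 / 15) ^ N * ballVol N (5 / 4 * t) ≤
      ballVol N ((5 / 4 * t - R) / 2) - ballVol N ((t - R) / 2) := by
  rw [ballVol_eq (r := 5 / 4 * t) (by linarith),
    ballVol_eq (r := (5 / 4 * t - R) / 2) (by linarith),
    ballVol_eq (r := (t - R) / 2) (by linarith), ← sub_mul, ← mul_assoc]
  exact mul_le_mul_of_nonneg_right (pow_layer_increment hN hR ht) ENNReal.toReal_nonneg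

noncomputable def layerScale (R : ℝ) (k : ℕ) : ℝ := 3 * R * (5 / 4) ^ k

theorem layerScale_mono {R : ℝ} (hR : 0 ≤ R) : Monotone (layerScale R) := fun j k h => by
  unfold layerScale; gcongr; norm_num

theorem layerScale_succ (R : ℝ) (k : ℕ) : layerScale R (k + 1) = 5 / 4 * layerScale R k := by
  unfold layerScale; ring

theorem le_layerScale {R : ℝ} (hR : 0 ≤ R) (k : ℕ) : 3 * R ≤ layerScale R k := by
  simpa [layerScale] using layerScale_mono hR k.zero_le

/-- `sum_ncard_mul_ballVol_sub_le` with radii `(layerScale R k - R) / 2`. -/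
theorem mul_layers_le_one_of_lt_countP_ratio {N : ℕ} (hN : 0 < N) {Λ : Set (Euc N)}
    {x₀ x c : Euc N} {R ρ a σ : ℝ} {K : ℕ} (hR : 0 < R) (hx : x ∈ locSet Λ x₀ R)
    (hiso : ∀ z ∈ locSet Λ x₀ R, dist z x ≤ ρ → z = x) (hKρ : layerScale R K ≤ ρ) (hσ : 0 < σ)
    (hcount : ∀ k ∈ range K, a < (countP Λ x (layerScale R (k + 1)) (cube c σ) : ℝ) *
      ballVol N (layerScale R (k + 1)) / σ ^ N) :
    a * (K * (3 * N / 8 * (4 / 15) ^ N)) ≤ 1 := by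
  set s := layerScale R
  set A : ℕ → Set (Euc N) := fun k => locIn Λ x (s k) (cube c σ)
  set r : ℕ → ℝ := fun k => (s k - R) / 2
  have hs_mono := layerScale_mono hR.le
  have hs_ge := le_layerScale hR.le
  have hvol : volume (cube c σ) = ENNReal.ofReal (σ ^ N) := volume_cube c hσ.le
  have hA : Antitone A := fun j k h y hy =>
    ⟨locSet_anti (hs_mono h) hy.1, (Metric.closedBall_subset_closedBall (hs_mono h)).trans hy.2⟩
  have hball : ∀ k, ∀ y ∈ A k, Metric.closedBall y (r k) ⊆ cube c σ := fun k y hy =>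
    (Metric.closedBall_subset_closedBall (by simp only [r]; linarith [hs_ge k])).trans hy.2
  have hsep : ∀ k ≤ K, ∀ y ∈ A k, ∀ z ∈ A 0, z ≠ y → 2 * r k < dist z y :=
    fun k hk y hy z hz hne => by
      have := sub_lt_dist_of_mem_locSet hR.le hiso ((hs_mono hk).trans hKρ) hy.1
        (locSet_subset_of_mem hx (by linarith [hs_ge 0]) hz.1) hne
      simp only [r]; linarith
  have hlayers := sum_ncard_mul_ballVol_sub_le (hvol ▸ ENNReal.ofReal_ne_top) hA
    (by simp only [r]; linarith [hs_ge 0]) (fun j k h => by simp only [r]; linarith [hs_mono h])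
    hball hsep
  rw [measureReal_def, hvol, ENNReal.toReal_ofReal (by positivity)] at hlayers
  have hterm : ∀ k ∈ range K, a * σ ^ N * (3 * N / 8 * (4 / 15) ^ N) ≤
      ((A (k + 1)).ncard : ℝ) * (ballVol N (r (k + 1)) - ballVol N (r k)) := by
    intro k hk
    have hinc := ballVol_layer_increment hN hR.le (hs_ge k)
    rw [← layerScale_succ] at hinc
    have hc := (lt_div_iff₀ (by positivity)).1 (hcount k hk)
    calc a * σ ^ N * (3 * N / 8 * (4 / 15) ^ N)
        ≤ (countP Λ x (s (k + 1)) (cube c σ) : ℝ) * ballVol N (s (k + 1)) *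
            (3 * N / 8 * (4 / 15) ^ N) := mul_le_mul_of_nonneg_right hc.le (by positivity)
      _ = ((A (k + 1)).ncard : ℝ) * (3 * N / 8 * (4 / 15) ^ N * ballVol N (s (k + 1))) := by
          rw [countP]; ring
      _ ≤ _ := mul_le_mul_of_nonneg_left hinc (Nat.cast_nonneg _)
  have htotal := (sum_le_sum hterm).trans hlayers
  rw [sum_const, card_range, nsmul_eq_mul] at htotal
  have hσN : 0 < σ ^ N := by positivity
  nlinarith

theorem wPW_mul_layers_le_one {N : ℕ} (hN : 0 < N) {Λ : Set (Euc N)} {x₀ x : Euc N}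
    {R ρ : ℝ} {K : ℕ} (hR : 1 ≤ 3 * R) (hx : x ∈ locSet Λ x₀ R)
    (hiso : ∀ z ∈ locSet Λ x₀ R, dist z x ≤ ρ → z = x) (hKρ : layerScale R K ≤ ρ) :
    wPW Λ * (K * (3 * N / 8 * (4 / 15) ^ N)) ≤ 1 := by
  have hR0 : 0 < R := by linarith
  rcases (show (0 : ℝ) ≤ K * (3 * N / 8 * (4 / 15) ^ N) by positivity).eq_or_lt with h | h
  · rw [← h, mul_zero]; exact zero_le_one
  rw [← le_div_iff₀ h]
  refine le_of_forall_lt_imp_le_of_dense fun a ha => (le_div_iff₀ h).2 ?_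
  obtain ⟨⟨c, σ⟩, hcount, hσ⟩ := (((eventually_all_finset (range K)).2 fun k _ =>
    eventually_lt_countP_ratio hx.1 (hR.trans (le_layerScale hR0.le (k + 1))) ha).and
      eventually_cubeFilter_pos).exists
  exact mul_layers_le_one_of_lt_countP_ratio hN hR0 hx hiso hKρ hσ hcount

theorem mul_natCast_le_two_mul_six_pow {N : ℕ} (hN : 0 < N) {y : ℝ}
    (h : y * (3 * N / 8 * (4 / 15) ^ N) ≤ 1) : y * N ≤ 2 * 6 ^ N := by
  have hprod : (4 / 15 : ℝ) ^ N * (15 / 4) ^ N = 1 := by rw [← mul_pow]; norm_num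
  have h15 : (15 / 4 : ℝ) ^ N ≤ 3 / 4 * 6 ^ N := by
    have h58 : (5 / 8 : ℝ) ^ N ≤ 5 / 8 := pow_le_of_le_one (by norm_num) (by norm_num) hN.ne'
    calc (15 / 4 : ℝ) ^ N = (5 / 8) ^ N * 6 ^ N := by rw [← mul_pow]; norm_num
      _ ≤ 3 / 4 * 6 ^ N := by gcongr; linarith
  calc y * N = y * (3 * N / 8 * (4 / 15) ^ N) * (8 / 3 * (15 / 4) ^ N) := by
        linear_combination (-(y * N)) * hprod
    _ ≤ 1 * (8 / 3 * (15 / 4) ^ N) := mul_le_mul_of_nonneg_right h (by positivity)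
    _ ≤ 2 * 6 ^ N := by linarith

theorem inner_radius_bound_general {N : ℕ} (hN : 0 < N) (Λ : Set (Euc N))
    (hPW : PW Λ)
    (x₀ : Euc N) (R : ℝ) (hR : 3 ≤ R) :
    ∀ x ∈ locSet Λ x₀ R,
      rIn x (voronoiCell (locSet Λ x₀ R) x) ≤
        ENNReal.ofReal
          (max 2 (4 * Real.exp ((6 : ℝ) ^ N / (2 * wPW Λ * N))) * R) := by
  intro x hx
  set w := wPW Λ
  set E := (6 : ℝ) ^ N / (2 * w * N)
  set c := max 2 (4 * Real.exp E)
  have hw : 0 < w := hPW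
  have hc : 4 * Real.exp E ≤ c := le_max_right _ _
  have hexp : 1 ≤ Real.exp E := Real.one_le_exp (by positivity)
  refine sSup_le fun r hr => le_of_not_gt fun hlt => ?_
  have hiso : ∀ z ∈ locSet Λ x₀ R, dist z x ≤ c * R → z = x := fun z hz hzx =>
    eq_of_closedBall_subset_voronoiCell ((Metric.closedEBall_subset_closedEBall hlt.le).trans hr)
      hz hzx
  obtain ⟨K, hKc, hcK⟩ := exists_nat_pow_near (by linarith : 1 ≤ c / 3)
    (by norm_num : (1 : ℝ) < 5 / 4)
  have hlayers := wPW_mul_layers_le_one hN (by linarith) hx hiso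
    (by unfold layerScale; nlinarith : layerScale R K ≤ c * R)
  have hKw := mul_natCast_le_two_mul_six_pow hN (y := K * w) (by linarith)
  have hEK := four_mul_lt_of_exp_lt_pow (E := E) (K := K) (by linarith)
  have hKw_gt : 2 * 6 ^ N < K * w * N := by
    rw [show 4 * E = 2 * 6 ^ N / (w * N) by ring] at hEK
    rw [mul_assoc]
    exact (div_lt_iff₀ (by positivity)).1 hEK
  linarith

/-- If a Delone set Λ satisfies (PW) (with weight `w = wPW Λ`) and (U),
and `P = (x₀, R)` is a ball pattern with `R ≥ 3`, then for every `x ∈ L_P` the inner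
radius of the Voronoi cell of `x` in `L_P` is at most `c·R`, where
`c = max(2, 4·exp(6^N/(2wN)))`. -/
theorem inner_radius_bound {N : ℕ} (hN : 0 < N) (Λ : Set (Euc N))
    (hΛ : IsDelone Λ) (hPW : PW Λ) (hU : URW Λ)
    (x₀ : Euc N) (hx₀ : x₀ ∈ Λ) (R : ℝ) (hR : 3 ≤ R) :
    ∀ x ∈ locSet Λ x₀ R,
      rIn x (voronoiCell (locSet Λ x₀ R) x) ≤
        ENNReal.ofReal
          (max 2 (4 * Real.exp ((6 : ℝ) ^ N / (2 * wPW Λ * N))) * R) :=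
  inner_radius_bound_general hN Λ hPW x₀ R hR
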